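/- arXiv:1304.7719 — 2 statements merged into one kernel-verified Lean document; each statement's English description precedes it below -/
import Mathlib

section
/- Let S be a closed set of pairs and let b ∈ SL_n(ℂ) be upper triangular. Then there exist c ∈ U_S and an upper triangular matrix d ∈ SL_n(ℂ) with d_{ij} = 0 for every pair i ≠ j with i ∈ S_j, such that b = c·d. -/
/-!
Clear the entries of `b` at the positions `(i, j) ∈ S` by row operations `b ↦ (1 + t E_ij) b` with
`t = -b_ij / b_jj` (the diagonal of `b` is nonzero since `det b = 1`). These transvections lie in
`U_S`, which is closed under products because `S` is closed, so their inverses accumulate into `c`.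
Such an operation changes only row `i`, and there only the columns `≥ j` since `b_jk = 0` for
`k < j`; hence the per-column numbers of nonzero entries at positions of `S` decrease
lexicographically, and the process terminates.
-/

open Matrix Filter Topology

noncomputable section

/-- A finite set `S` of pairs `(i,j)` of indices with `i < j` is *closed* if
`(i,j) ∈ S` and `(j,k) ∈ S` imply `(i,k) ∈ S`. -/
def PairsClosed {n : ℕ} (S : Finset (Fin n × Fin n)) : Prop :=
  (∀ p ∈ S, p.1 < p.2) ∧ ∀ i j k : Fin n, (i, j) ∈ S → (j, k) ∈ S → (i, k) ∈ S

/-- The subgroup `U_S` of `SL_n(ℂ)`, as a set: matrices that are upper triangular,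
with ones on the diagonal, and vanishing at each entry `(i,j)` with `i < j` and
`(i,j) ∉ S`. -/
def USet {n : ℕ} (S : Finset (Fin n × Fin n)) :
    Set (Matrix.SpecialLinearGroup (Fin n) ℂ) :=
  {u | (∀ i j : Fin n, j < i → u.val i j = 0) ∧ (∀ i : Fin n, u.val i i = 1) ∧
       ∀ i j : Fin n, i < j → (i, j) ∉ S → u.val i j = 0}

/-- `S_j = {j} ∪ {i : (i,j) ∈ S}`. -/
def colS {n : ℕ} (S : Finset (Fin n × Fin n)) (j : Fin n) : Finset (Fin n) :=
  insert j ((S.filter (fun p => p.2 = j)).image Prod.fst)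

open Finset

section Triangular

variable {m R : Type*} [Fintype m] [LinearOrder m]

theorem Matrix.IsUpperTriangular.apply_self_ne_zero [CommRing R] {M : Matrix m m R}
    (hM : M.IsUpperTriangular) (hdet : M.det ≠ 0) (i : m) : M i i ≠ 0 := fun hi =>
  hdet <| by rw [det_of_isUpperTriangular hM]; exact prod_eq_zero (mem_univ i) hi

theorem Matrix.transvection_mul_apply_of_lt [CommRing R] {M : Matrix m m R}
    (hM : M.IsUpperTriangular) {i j : m} (c : R) (a : m) {k : m} (hk : k < j) :
    (transvection i j c * M) a k = M a k := by
  rcases eq_or_ne a i with rfl | ha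
  · rw [transvection_mul_apply_same, hM hk, mul_zero, add_zero]
  · exact transvection_mul_apply_of_ne i j a k ha c M

theorem Matrix.transvection_mul_apply_eq_zero [Field R] (M : Matrix m m R) {i j : m}
    (hjj : M j j ≠ 0) : (transvection i j (-M i j / M j j) * M) i j = 0 := by
  rw [transvection_mul_apply_same, div_mul_cancel₀ _ hjj, add_neg_cancel]

open Classical in
def nonzeroCount [Zero R] (S : Finset (m × m)) (M : Matrix m m R) (j : m) : ℕ :=
  #{i | (i, j) ∈ S ∧ M i j ≠ 0}

/-- The order is lexicographic so that the columns right of `j`, which a row operation may spoil,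
do not matter. -/
theorem toLex_nonzeroCount_lt [Zero R] {S : Finset (m × m)} {M M' : Matrix m m R} {i j : m}
    (hij : (i, j) ∈ S) (hM : M i j ≠ 0) (hM' : M' i j = 0)
    (heq : ∀ a k, a ≠ i ∨ k < j → M' a k = M a k) :
    toLex (nonzeroCount S M') < toLex (nonzeroCount S M) := by
  classical
  refine ⟨j, fun k hk => ?_, ?_⟩
  · simp only [Pi.toLex_apply, nonzeroCount]
    congr 1
    ext a
    simp [heq a k (.inr hk)]
  · have hcol : ({a | (a, j) ∈ S ∧ M' a j ≠ 0} : Finset m) =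
        ({a | (a, j) ∈ S ∧ M a j ≠ 0} : Finset m).erase i := by
      ext a
      rcases eq_or_ne a i with rfl | ha
      · simp [hM']
      · simp [ha, heq a j (Or.inl ha)]
    simp only [Pi.toLex_apply, nonzeroCount, hcol]
    exact Finset.card_erase_lt_of_mem (by simp [hij, hM])

end Triangular

section UnipotentSubgroup

variable {n : ℕ} {S : Finset (Fin n × Fin n)}

theorem mem_colS_iff {i j : Fin n} : i ∈ colS S j ↔ i = j ∨ (i, j) ∈ S := by
  simp [colS]

theorem mem_USet_iff (hS : ∀ p ∈ S, p.1 < p.2) {u : SpecialLinearGroup (Fin n) ℂ} :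
    u ∈ USet S ↔ (∀ i, u.val i i = 1) ∧ ∀ i j, u.val i j ≠ 0 → i = j ∨ (i, j) ∈ S := by
  refine ⟨fun ⟨hlow, hdiag, hup⟩ => ⟨hdiag, fun i j hij => ?_⟩,
    fun ⟨hdiag, hsupp⟩ => ⟨fun i j hji => ?_, hdiag, fun i j hij hS' => ?_⟩⟩
  · by_contra! h
    rcases lt_or_gt_of_ne h.1 with hlt | hlt
    exacts [hij (hup i j hlt h.2), hij (hlow i j hlt)]
  · by_contra h
    rcases hsupp i j h with rfl | hmem
    exacts [lt_irrefl _ hji, lt_asymm hji (hS _ hmem)]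
  · by_contra h
    rcases hsupp i j h with rfl | hmem
    exacts [lt_irrefl _ hij, hS' hmem]

theorem one_mem_USet : 1 ∈ USet S :=
  ⟨fun _ _ h => one_apply_ne h.ne', one_apply_eq, fun _ _ h _ => one_apply_ne h.ne⟩

theorem mul_mem_USet (hS : PairsClosed S) {u v : SpecialLinearGroup (Fin n) ℂ}
    (hu : u ∈ USet S) (hv : v ∈ USet S) : u * v ∈ USet S := by
  rw [mem_USet_iff hS.1] at hu hv ⊢
  have hterm : ∀ i k j, u.val i k * v.val k j ≠ 0 → (i = k ∨ (i, k) ∈ S) ∧ (k = j ∨ (k, j) ∈ S) :=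
    fun i k j h => ⟨hu.2 i k (left_ne_zero_of_mul h), hv.2 k j (right_ne_zero_of_mul h)⟩
  refine ⟨fun i => ?_, fun i j h => ?_⟩
  · change (u.val * v.val) i i = 1
    rw [mul_apply, Finset.sum_eq_single i, hu.1, hv.1, one_mul]
    · intro k _ hki
      by_contra h
      obtain ⟨hik | hik, hki' | hki'⟩ := hterm i k i h
      all_goals first
        | exact hki hik.symm
        | exact hki hki'
        | exact lt_asymm (hS.1 _ hik) (hS.1 _ hki')
    · simp
  · change (u.val * v.val) i j ≠ 0 at h
    rw [mul_apply] at h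
    obtain ⟨k, -, hk⟩ := Finset.exists_ne_zero_of_sum_ne_zero h
    obtain ⟨rfl | hik, rfl | hkj⟩ := hterm i k j hk
    exacts [.inl rfl, .inr hkj, .inr hik, .inr (hS.2 i k j hik hkj)]

def transvectionSL {i j : Fin n} (hij : i ≠ j) (c : ℂ) : SpecialLinearGroup (Fin n) ℂ :=
  ⟨transvection i j c, det_transvection_of_ne i j hij c⟩

theorem transvectionSL_neg_mul_self {i j : Fin n} (hij : i ≠ j) (c : ℂ) :
    transvectionSL hij (-c) * transvectionSL hij c = 1 :=
  Subtype.ext <| (transvection_mul_transvection_same i j hij _ _).trans <| by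
    rw [neg_add_cancel, transvection_zero]; rfl

theorem transvectionSL_mem_USet (hS : ∀ p ∈ S, p.1 < p.2) {i j : Fin n} (hij : (i, j) ∈ S)
    (c : ℂ) : transvectionSL (hS _ hij).ne c ∈ USet S := by
  have hne : i ≠ j := (hS _ hij).ne
  refine (mem_USet_iff hS).2 ⟨fun a => ?_, fun a b h => ?_⟩
  · have : ¬(i = a ∧ j = a) := fun h => hne (h.1.trans h.2.symm)
    simp [transvectionSL, transvection, single_apply_of_ne (h := this)]
  · by_contra! hab
    have : ¬(i = a ∧ j = b) := by rintro ⟨rfl, rfl⟩; exact hab.2 hij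
    exact h (by
      simp [transvectionSL, transvection, one_apply_ne hab.1, single_apply_of_ne (h := this)])

theorem exists_mem_USet_mul_eq (hS : PairsClosed S) (b : SpecialLinearGroup (Fin n) ℂ)
    (hb : b.val.IsUpperTriangular) :
    ∃ c d : SpecialLinearGroup (Fin n) ℂ, c ∈ USet S ∧ d.val.IsUpperTriangular ∧
      (∀ p ∈ S, d.val p.1 p.2 = 0) ∧ b = c * d := by
  induction hμ : toLex (nonzeroCount S b.val) using WellFoundedLT.induction generalizing b with
  | ind μ ih =>
  subst hμ
  by_cases hzero : ∀ p ∈ S, b.val p.1 p.2 = 0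
  · exact ⟨1, b, one_mem_USet, hb, hzero, (one_mul b).symm⟩
  push Not at hzero
  obtain ⟨⟨i, j⟩, hp, hne⟩ := hzero
  have hij : i < j := hS.1 _ hp
  set t := -b.val i j / b.val j j
  set e := transvectionSL (hS.1 _ hp).ne t
  have he : (e * b).val.IsUpperTriangular := (blockTriangular_transvection hij.le t).mul hb
  have hlt : toLex (nonzeroCount S (e * b).val) < toLex (nonzeroCount S b.val) := by
    refine toLex_nonzeroCount_lt hp hne (transvection_mul_apply_eq_zero _ ?_) fun a k hak => ?_
    · exact IsUpperTriangular.apply_self_ne_zero hb (by simp) j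
    · rcases hak with ha | hk
      exacts [transvection_mul_apply_of_ne i j a k ha t b.val,
        transvection_mul_apply_of_lt hb t a hk]
  obtain ⟨c, d, hc, hd, hdS, hfac⟩ := ih _ hlt (e * b) he rfl
  refine ⟨transvectionSL (hS.1 _ hp).ne (-t) * c, d,
    mul_mem_USet hS (transvectionSL_mem_USet hS.1 hp _) hc, hd, hdS, ?_⟩
  rw [mul_assoc, ← hfac, ← mul_assoc, transvectionSL_neg_mul_self, one_mul]

end UnipotentSubgroup

theorem stmt8_general {n : ℕ} (S : Finset (Fin n × Fin n)) (hS : PairsClosed S)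
    (b : Matrix.SpecialLinearGroup (Fin n) ℂ)
    (hb : ∀ i j : Fin n, j < i → b.val i j = 0) :
    ∃ c d : Matrix.SpecialLinearGroup (Fin n) ℂ,
      c ∈ USet S ∧
      (∀ i j : Fin n, j < i → d.val i j = 0) ∧
      (∀ i j : Fin n, i ≠ j → i ∈ colS S j → d.val i j = 0) ∧
      b = c * d := by
  obtain ⟨c, d, hc, hd, hdS, hfac⟩ := exists_mem_USet_mul_eq hS b fun i j h => hb i j h
  refine ⟨c, d, hc, fun i j h => hd h, fun i j hij hmem => ?_, hfac⟩
  exact hdS (i, j) ((mem_colS_iff.1 hmem).resolve_left hij)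

/-- Let `S` be a closed set of pairs and `b ∈ SL_n(ℂ)` upper
triangular. Then there exist `c ∈ U_S` and an upper triangular `d ∈ SL_n(ℂ)` with
`d_{ij} = 0` for every pair `i ≠ j` with `i ∈ S_j`, such that `b = c·d`. -/
theorem stmt8 {n : ℕ} (hn : 1 ≤ n) (S : Finset (Fin n × Fin n)) (hS : PairsClosed S)
    (b : Matrix.SpecialLinearGroup (Fin n) ℂ)
    (hb : ∀ i j : Fin n, j < i → b.val i j = 0) :
    ∃ c d : Matrix.SpecialLinearGroup (Fin n) ℂ,
      c ∈ USet S ∧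
      (∀ i j : Fin n, j < i → d.val i j = 0) ∧
      (∀ i j : Fin n, i ≠ j → i ∈ colS S j → d.val i j = 0) ∧
      b = c * d :=
  stmt8_general S hS b hb

end
end

section
/- Let S be a closed set of pairs and let R, C ⊆ {1,…,n} be subsets with |R| = |C| ≥ 1. Then the minor det_R^C satisfies det_R^C(gu) = det_R^C(g) for all g ∈ SL_n(ℂ) and all u ∈ U_S if and only if S_j ⊆ C for every j ∈ C. -/
/-!
If `S_j ⊆ C` for every `j ∈ C`, then for `u ∈ U_S` the columns of `u` indexed by `C` are supported
on the rows in `C`, so `(gu)[R,C] = g[R,C] · u[C,C]` with `u[C,C]` unitriangular.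
Conversely, if `(i,j) ∈ S` with `j ∈ C` and `i ∉ C`, right multiplication by the transvection
`1 + E_{ij} ∈ U_S` adds column `i` to column `j`; by multilinearity it changes `det_R^C(g)` by the
minor with column `j` replaced by `i`, and a scalar multiple of a permutation matrix in `SL_n(ℂ)`
makes that minor nonzero.
-/

open Matrix Filter Topology

noncomputable section

/-- The minor `det_R^C` of a matrix: the determinant of the square submatrix with rows
indexed by `R` and columns indexed by `C` (both taken in increasing order). -/
def minorF {n : ℕ} (R C : Finset (Fin n)) (h : R.card = C.card)
    (g : Matrix (Fin n) (Fin n) ℂ) : ℂ :=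
  Matrix.det (Matrix.of fun a b : Fin R.card =>
    g (R.orderIsoOfFin rfl a) (C.orderIsoOfFin h.symm b))

open Function

theorem Function.Injective.update_of_notMem_range {α β : Type*} [DecidableEq α] {f : α → β}
    (hf : Injective f) (a : α) {b : β} (hb : b ∉ Set.range f) : Injective (update f a b) := by
  intro x y h
  by_cases hx : x = a <;> by_cases hy : y = a
  · exact hx.trans hy.symm
  · subst hx
    rw [update_self, update_of_ne hy] at h
    exact absurd ⟨y, h.symm⟩ hb
  · subst hy
    rw [update_of_ne hx, update_self] at h
    exact absurd ⟨x, h⟩ hb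
  · rw [update_of_ne hx, update_of_ne hy] at h
    exact hf h

namespace Matrix

variable {ι κ R : Type*}

theorem IsUpperTriangular.submatrix [Zero R] [LinearOrder ι] [LinearOrder κ] {u : Matrix ι ι R}
    (hu : u.IsUpperTriangular) {c : κ → ι} (hc : StrictMono c) :
    (u.submatrix c c).IsUpperTriangular :=
  fun _ _ h => hu (hc h)

variable [Fintype ι] [Fintype κ]

theorem submatrix_mul_of_apply_eq_zero [NonUnitalNonAssocSemiring R] (g u : Matrix ι ι R)
    (f : κ → ι) {c : κ → ι} (hc : Injective c) (hu : ∀ k ∉ Set.range c, ∀ b, u k (c b) = 0) :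
    (g * u).submatrix f c = g.submatrix f c * u.submatrix c c := by
  ext a b
  simp only [submatrix_apply, mul_apply]
  exact (Fintype.sum_of_injective c hc _ _ (fun k hk => by simp [hu k hk b]) fun _ => rfl).symm

variable [DecidableEq ι] [DecidableEq κ]

theorem det_submatrix_mul_transvection [CommRing R] (g : Matrix ι ι R) (f c : κ → ι)
    (hc : Injective c) {b : κ} (i : ι) {j : ι} (hb : c b = j) (x : R) :
    ((g * transvection i j x).submatrix f c).det =
      (g.submatrix f c).det + x * (g.submatrix f (update c b i)).det := by
  have hmul : (g * transvection i j x).submatrix f c =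
      (g.submatrix f c).updateCol b ((fun a => g (f a) (c b)) + x • fun a => g (f a) i) := by
    ext a b'
    by_cases hb' : b' = b
    · subst hb' hb; simp
    · have : c b' ≠ j := hb ▸ hc.ne hb'
      simp [hb', this]
  have hupd : g.submatrix f (update c b i) = (g.submatrix f c).updateCol b fun a => g (f a) i := by
    ext a b'
    by_cases hb' : b' = b
    · subst hb'; simp
    · simp [hb']
  rw [hmul, det_updateCol_add, det_updateCol_smul, hupd]
  congr 2
  exact updateCol_eq_self _ _

theorem SpecialLinearGroup.exists_det_submatrix_ne_zero {K : Type*} [Field K] [IsAlgClosed K] [Nonempty ι]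
    {f c : κ → ι} (hf : Injective f) (hc : Injective c) :
    ∃ g : SpecialLinearGroup ι K, ((g : Matrix ι ι K).submatrix f c).det ≠ 0 := by
  obtain ⟨σ, hσ⟩ := Equiv.Perm.exists_extending_pair f c hf hc
  obtain ⟨ζ, hζ⟩ :=
    IsAlgClosed.exists_pow_nat_eq ((Equiv.Perm.sign σ : ℤ) : K) (Fintype.card_pos (α := ι))
  have hdet : (ζ • σ.permMatrix K).det = 1 := by
    rw [det_smul, det_permutation, hζ, ← Int.cast_mul, ← Units.val_mul, Int.units_mul_self]
    simp
  have hζ0 : ζ ≠ 0 := by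
    rintro rfl
    simp at hdet
  refine ⟨⟨ζ • σ.permMatrix K, hdet⟩, ?_⟩
  have hsub : (ζ • σ.permMatrix K).submatrix f c = ζ • (1 : Matrix κ κ K) := by
    ext a b
    simp [PEquiv.toMatrix_apply, hσ, hc.eq_iff, one_apply]
  simp [hsub, hζ0]

end Matrix

lemma mem_colS {n : ℕ} {S : Finset (Fin n × Fin n)} {i j : Fin n} :
    i ∈ colS S j ↔ i = j ∨ (i, j) ∈ S := by
  simp [colS]

lemma minorF_eq_det_submatrix {n : ℕ} (R C : Finset (Fin n)) (h : R.card = C.card)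
    (g : Matrix (Fin n) (Fin n) ℂ) :
    minorF R C h g = (g.submatrix (R.orderEmbOfFin rfl) (C.orderEmbOfFin h.symm)).det :=
  rfl

section USet

variable {n : ℕ} {S : Finset (Fin n × Fin n)} {u : SpecialLinearGroup (Fin n) ℂ}

lemma isUpperTriangular_of_mem_USet (hu : u ∈ USet S) :
    (u : Matrix (Fin n) (Fin n) ℂ).IsUpperTriangular :=
  fun i j => hu.1 i j

lemma apply_eq_zero_of_notMem_colS (hu : u ∈ USet S) {k j : Fin n} (hk : k ∉ colS S j) :
    u k j = 0 := by
  rw [mem_colS, not_or] at hk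
  obtain hkj | hjk := Ne.lt_or_gt hk.1
  · exact hu.2.2 k j hkj hk.2
  · exact hu.1 k j hjk

lemma transvection_mem_USet {i j : Fin n} (hij : i < j) (hijS : (i, j) ∈ S) (x : ℂ) :
    SpecialLinearGroup.transvection hij.ne x ∈ USet S := by
  refine ⟨fun a b hba => ?_, fun a => ?_, fun a b hab habS => ?_⟩ <;>
    simp only [SpecialLinearGroup.transvection_coe, Matrix.add_apply, one_apply, single_apply] <;>
    grind

lemma det_submatrix_mul_of_mem_USet (g : Matrix (Fin n) (Fin n) ℂ) (hu : u ∈ USet S) {m : ℕ}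
    (f : Fin m → Fin n) {c : Fin m → Fin n} (hc : StrictMono c)
    (hcol : ∀ b, (colS S (c b) : Set (Fin n)) ⊆ Set.range c) :
    ((g * u).submatrix f c).det = (g.submatrix f c).det := by
  have hu_col : ∀ k ∉ Set.range c, ∀ b, u k (c b) = 0 := fun k hk b =>
    apply_eq_zero_of_notMem_colS hu fun hkb => hk (hcol b hkb)
  rw [submatrix_mul_of_apply_eq_zero _ _ _ hc.injective hu_col, det_mul,
    det_of_isUpperTriangular ((isUpperTriangular_of_mem_USet hu).submatrix hc)]
  simp only [submatrix_apply, hu.2.1, Finset.prod_const_one, mul_one]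

end USet

theorem stmt10_general {n : ℕ} (S : Finset (Fin n × Fin n)) (hS : PairsClosed S)
    (R C : Finset (Fin n)) (hRC : R.card = C.card) :
    (∀ g : Matrix.SpecialLinearGroup (Fin n) ℂ, ∀ u ∈ USet S,
        minorF R C hRC ((g * u).val) = minorF R C hRC g.val)
      ↔ (∀ j ∈ C, colS S j ⊆ C) := by
  have hval : ∀ g u : SpecialLinearGroup (Fin n) ℂ, (g * u).val = g.val * u.val := fun _ _ => rfl
  simp only [minorF_eq_det_submatrix, hval]
  set f := R.orderEmbOfFin rfl
  set c := C.orderEmbOfFin hRC.symm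
  constructor
  · intro hinv j hj i hi
    by_contra hiC
    obtain rfl | hijS := mem_colS.mp hi
    · exact hiC hj
    have hij : i < j := hS.1 _ hijS
    obtain ⟨b, hb⟩ : j ∈ Set.range c := by simpa [c] using hj
    have : Nonempty (Fin n) := ⟨i⟩
    obtain ⟨g, hg⟩ := SpecialLinearGroup.exists_det_submatrix_ne_zero (K := ℂ) f.injective
      (c.injective.update_of_notMem_range b (by simpa [c] using hiC))
    have hinv_g := hinv g _ (transvection_mem_USet hij hijS 1)
    rw [SpecialLinearGroup.transvection_coe, ← transvection,
      det_submatrix_mul_transvection _ _ _ c.injective i hb, one_mul, add_eq_left] at hinv_g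
    exact hg hinv_g
  · intro hC g u hu
    refine det_submatrix_mul_of_mem_USet _ hu f c.strictMono fun b => ?_
    rw [C.range_orderEmbOfFin, Finset.coe_subset]
    exact hC _ (C.orderEmbOfFin_mem _ b)

/-- Let `S` be a closed set of pairs and `R, C ⊆ {1,…,n}` with
`|R| = |C| ≥ 1`. Then the minor `det_R^C` satisfies `det_R^C(gu) = det_R^C(g)` for all
`g ∈ SL_n(ℂ)` and all `u ∈ U_S` if and only if `S_j ⊆ C` for every `j ∈ C`. -/
theorem stmt10 {n : ℕ} (hn : 1 ≤ n) (S : Finset (Fin n × Fin n)) (hS : PairsClosed S)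
    (R C : Finset (Fin n)) (hRC : R.card = C.card) (hpos : 1 ≤ C.card) :
    (∀ g : Matrix.SpecialLinearGroup (Fin n) ℂ, ∀ u ∈ USet S,
        minorF R C hRC ((g * u).val) = minorF R C hRC g.val)
      ↔ (∀ j ∈ C, colS S j ⊆ C) :=
  stmt10_general S hS R C hRC

end
end
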